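/- arXiv:1912.00628 — 3 statements merged into one kernel-verified Lean document; each statement's English description precedes it below -/
import Mathlib

section
/- Let φ : [0,2R] → ℝ be C² with φ'' ≤ 0 on (0,R), φ constant equal to h on [0,R₁] for some 0 < R₁ < R (so φ' ≤ 0 on [0,R)). Then ∫₀^R r·|W(r)| dr ≤ −R·φ'(R)/√(1+(φ'(R))²), where |W(r)| = √((φ''/(1+(φ')²)^{3/2})² + (φ'/(r√(1+(φ')²)))²). -/
/-!
Where `φ' ≤ 0` and `φ'' ≤ 0` both principal curvatures of the graph are nonpositive, so
`|W| ≤ -(κ₁ + κ₂)`, and `r (κ₁ + κ₂)` is the derivative of `r φ' / √(1 + φ'²)`. Integrating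
therefore telescopes to the boundary term at `R`. Since `φ` is constant near `0`, all these
functions vanish there and extend continuously to `r = 0`.
-/

open MeasureTheory intervalIntegral Set Filter Topology

/-- `|W(r)|` in terms of `u = φ'(r)` and `v = φ''(r)`: the principal curvatures of the graph are
`v / (1 + u²)^{3/2}` along the meridian and `u / (r √(1 + u²))` along the parallel. -/
noncomputable def weingartenNorm (r u v : ℝ) : ℝ :=
  √((v / (1 + u ^ 2) ^ ((3:ℝ)/2)) ^ 2 + (u / (r * √(1 + u ^ 2))) ^ 2)

lemma Real.rpow_three_halves {x : ℝ} (hx : 0 < x) : x ^ ((3:ℝ)/2) = x * √x := by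
  rw [show (3:ℝ)/2 = 1 + 1/2 by norm_num, Real.rpow_add hx, Real.rpow_one, ← Real.sqrt_eq_rpow]

lemma Real.sqrt_sq_add_sq_le_neg_add {a b : ℝ} (ha : a ≤ 0) (hb : b ≤ 0) :
    √(a ^ 2 + b ^ 2) ≤ -(a + b) :=
  Real.sqrt_le_iff.mpr ⟨by linarith, by nlinarith⟩

lemma HasDerivAt.div_sqrt_one_add_sq {f : ℝ → ℝ} {f' x : ℝ} (hf : HasDerivAt f f' x) :
    HasDerivAt (fun t => f t / √(1 + f t ^ 2)) (f' / (1 + f x ^ 2) ^ ((3:ℝ)/2)) x := by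
  have hpos : 0 < 1 + f x ^ 2 := by positivity
  have hsqrt := ((hf.fun_pow 2).const_add 1).sqrt hpos.ne'
  refine (hf.div hsqrt (Real.sqrt_pos.mpr hpos).ne').congr_deriv ?_
  rw [Real.rpow_three_halves hpos]
  field_simp
  rw [Real.sq_sqrt hpos.le]
  ring

lemma mul_weingartenNorm_le {r u v : ℝ} (hr : 0 < r) (hu : u ≤ 0) (hv : v ≤ 0) :
    r * weingartenNorm r u v ≤ -(u / √(1 + u ^ 2) + r * (v / (1 + u ^ 2) ^ ((3:ℝ)/2))) := by
  have hS : 0 < √(1 + u ^ 2) := Real.sqrt_pos.mpr (by positivity)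
  calc r * weingartenNorm r u v
      ≤ r * -(v / (1 + u ^ 2) ^ ((3:ℝ)/2) + u / (r * √(1 + u ^ 2))) :=
        mul_le_mul_of_nonneg_left (Real.sqrt_sq_add_sq_le_neg_add
          (div_nonpos_of_nonpos_of_nonneg hv (by positivity))
          (div_nonpos_of_nonpos_of_nonneg hu (by positivity))) hr.le
    _ = -(u / √(1 + u ^ 2) + r * (v / (1 + u ^ 2) ^ ((3:ℝ)/2))) := by
        field_simp
        ring

lemma eqOn_deriv_zero_of_eqOn_const {f : ℝ → ℝ} {s : Set ℝ} {c : ℝ} (hs : IsOpen s)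
    (hf : EqOn f (fun _ => c) s) : EqOn (deriv f) 0 s := fun x hx => by
  rw [(eventuallyEq_of_mem (hs.mem_nhds hx) hf).deriv_eq, deriv_const, Pi.zero_apply]

section SecondDerivative

variable {𝕜 E : Type*} [NontriviallyNormedField 𝕜] [NormedAddCommGroup E] [NormedSpace 𝕜 E]
  {f : 𝕜 → E} {s : Set 𝕜} {x : 𝕜}

lemma ContDiffOn.hasDerivAt_deriv_of_isOpen (hf : ContDiffOn 𝕜 2 f s) (hs : IsOpen s)
    (hx : x ∈ s) : HasDerivAt (deriv f) (deriv (deriv f) x) x :=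
  ((hf.deriv_of_isOpen hs (m := 1) (by norm_num)).differentiableOn one_ne_zero x hx
    |>.differentiableAt (hs.mem_nhds hx)).hasDerivAt

lemma ContDiffOn.continuousAt_deriv_deriv_of_isOpen (hf : ContDiffOn 𝕜 2 f s) (hs : IsOpen s)
    (hx : x ∈ s) : ContinuousAt (deriv (deriv f)) x :=
  ((hf.deriv_of_isOpen hs (m := 1) (by norm_num)).deriv_of_isOpen hs (m := 0) le_rfl
    |>.continuousOn).continuousAt (hs.mem_nhds hx)

end SecondDerivative

lemma ContinuousAt.mul_weingartenNorm {u v : ℝ → ℝ} {x : ℝ} (hx : 0 < x)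
    (hu : ContinuousAt u x) (hv : ContinuousAt v x) :
    ContinuousAt (fun r => r * weingartenNorm r (u r) (v r)) x := by
  unfold weingartenNorm
  fun_prop (disch := positivity)

lemma continuousOn_Icc_of_eqOn_const_Ioo {f : ℝ → ℝ} {a b c y : ℝ} (hac : a < c) (ha : f a = y)
    (hconst : EqOn f (fun _ => y) (Ioo a c)) (hcont : ∀ x ∈ Ioc a b, ContinuousAt f x) :
    ContinuousOn f (Icc a b) := by
  have hIco : EqOn f (fun _ => y) (Ico a c) := by
    rintro x ⟨hax, hxc⟩
    rcases hax.eq_or_lt with rfl | hax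
    exacts [ha, hconst ⟨hax, hxc⟩]
  intro x hx
  rcases lt_or_ge x c with hxc | hcx
  · have hev : f =ᶠ[𝓝[Icc a b] x] fun _ => y := by
      filter_upwards [mem_nhdsWithin_of_mem_nhds (Iio_mem_nhds hxc), self_mem_nhdsWithin]
        with t htc hta using hIco ⟨hta.1, htc⟩
    exact continuousWithinAt_const.congr_of_eventuallyEq hev (hIco ⟨hx.1, hxc⟩)
  · exact (hcont x ⟨hac.trans_le hcx, hx.2⟩).continuousWithinAt

theorem weingarten_integral_upper_bound_general
    (R R₁ h : ℝ) (hR : 0 < R) (hR₁ : 0 < R₁)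
    (φ : ℝ → ℝ) (hφ : ContDiffOn ℝ 2 φ (Set.Icc 0 (2*R)))
    (hconc : ∀ r ∈ Set.Ioo 0 R, deriv (deriv φ) r ≤ 0)
    (hconst : ∀ r ∈ Set.Icc 0 R₁, φ r = h)
    (hφ'neg : ∀ r ∈ Set.Ico 0 R, deriv φ r ≤ 0) :
    (∫ r in (0:ℝ)..R,
        r * Real.sqrt ((deriv (deriv φ) r / (1 + (deriv φ r)^2) ^ ((3:ℝ)/2))^2
          + (deriv φ r / (r * Real.sqrt (1 + (deriv φ r)^2)))^2))
      ≤ -R * deriv φ R / Real.sqrt (1 + (deriv φ R)^2) := by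
  set I : Set ℝ := Ioo 0 (2 * R)
  have hIR : Ioc 0 R ⊆ I := fun r hr => ⟨hr.1, hr.2.trans_lt (by linarith)⟩
  have hφI : ContDiffOn ℝ 2 φ I := hφ.mono Ioo_subset_Icc_self
  have hφ'_zero : EqOn (deriv φ) 0 (Ioo 0 R₁) :=
    eqOn_deriv_zero_of_eqOn_const isOpen_Ioo fun r hr => hconst r (Ioo_subset_Icc_self hr)
  have hφ''_zero : EqOn (deriv (deriv φ)) 0 (Ioo 0 R₁) :=
    eqOn_deriv_zero_of_eqOn_const isOpen_Ioo hφ'_zero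
  let F : ℝ → ℝ := fun r => r * (deriv φ r / √(1 + deriv φ r ^ 2))
  have hF_deriv : ∀ r ∈ I, HasDerivAt F
      (deriv φ r / √(1 + deriv φ r ^ 2) + r * (deriv (deriv φ) r / (1 + deriv φ r ^ 2) ^ ((3:ℝ)/2)))
      r := fun r hr => by
    simpa only [one_mul] using
      (hasDerivAt_id' r).fun_mul (hφI.hasDerivAt_deriv_of_isOpen isOpen_Ioo hr).div_sqrt_one_add_sq
  have hF_cont : ContinuousOn F (Icc 0 R) := by
    refine continuousOn_Icc_of_eqOn_const_Ioo hR₁ (y := 0) (by simp [F]) (fun r hr => ?_)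
      fun r hr => ?_
    · simp [F, hφ'_zero hr]
    · exact (hF_deriv r (hIR hr)).continuousAt
  have hW_int : IntegrableOn (fun r => r * weingartenNorm r (deriv φ r) (deriv (deriv φ) r))
      (Icc 0 R) := by
    refine (continuousOn_Icc_of_eqOn_const_Ioo hR₁ (y := 0) (by simp) (fun r hr => ?_)
      fun r hr => ?_).integrableOn_Icc
    · simp [weingartenNorm, hφ'_zero hr, hφ''_zero hr]
    · exact ContinuousAt.mul_weingartenNorm hr.1
        (hφI.hasDerivAt_deriv_of_isOpen isOpen_Ioo (hIR hr)).continuousAt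
        (hφI.continuousAt_deriv_deriv_of_isOpen isOpen_Ioo (hIR hr))
  have hbound := integral_le_sub_of_hasDeriv_right_of_le hR.le hF_cont.neg
    (fun r hr => (hF_deriv r (hIR (Ioo_subset_Ioc_self hr))).neg.hasDerivWithinAt) hW_int
    fun r hr => mul_weingartenNorm_le hr.1 (hφ'neg r (Ioo_subset_Ico_self hr)) (hconc r hr)
  refine hbound.trans_eq ?_
  simp only [F, Pi.neg_apply, zero_mul, neg_zero, sub_zero]
  ring

/-- upper bound for `∫₀^R r·|W(r)| dr` for a radially symmetric concave cap. -/
theorem weingarten_integral_upper_bound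
    (R R₁ h : ℝ) (hR : 0 < R) (hR₁ : 0 < R₁) (hR₁R : R₁ < R)
    (φ : ℝ → ℝ) (hφ : ContDiffOn ℝ 2 φ (Set.Icc 0 (2*R)))
    (hconc : ∀ r ∈ Set.Ioo 0 R, deriv (deriv φ) r ≤ 0)
    (hconst : ∀ r ∈ Set.Icc 0 R₁, φ r = h)
    (hφ'0 : deriv φ 0 = 0)
    (hφ'neg : ∀ r ∈ Set.Ico 0 R, deriv φ r ≤ 0) :
    (∫ r in (0:ℝ)..R,
        r * Real.sqrt ((deriv (deriv φ) r / (1 + (deriv φ r)^2) ^ ((3:ℝ)/2))^2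
          + (deriv φ r / (r * Real.sqrt (1 + (deriv φ r)^2)))^2))
      ≤ -R * deriv φ R / Real.sqrt (1 + (deriv φ R)^2) :=
  weingarten_integral_upper_bound_general R R₁ h hR hR₁ φ hφ hconc hconst hφ'neg
end

section
/- Let Ω = (−2R,2R)² and let (uₙ) be a sequence of radially symmetric functions in the class S (C², equal to h > 0 on [0,R₁ₙ], equal to 0 on [R₂ₙ,2R], concave on (0,R), convex on (R,2R), with uₙ'(R) < −2h/R) converging pointwise to f = h·χ_{B(0,R)}. If additionally uₙ'(R) → −∞ and ∫₀^R uₙ'/√(1+(uₙ')²) dr → 0 and ∫_R^{2R} uₙ'/√(1+(uₙ')²) dr → 0, then ∫_Ω |W_{uₙ}| dx dy → 4πR, where |W_{uₙ}| is the norm of the Weingarten map of the graph of uₙ. -/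
/-!
With `g = u' / √(1 + u'²)` one has `g' = κ := u'' / (1 + u'²)^(3/2)`, and the radial Weingarten
density `r √(κ² + (g/r)²)` lies between `r |κ|` and `r |κ| + |g|`. Concavity on `(0, R)` and
convexity on `(R, 2R)` fix the sign of `κ` on each side and force `g ≤ 0`, so integrating
`r |κ| = ∓ r g'` by parts on each side gives
`-2R g(R) + ∫₀^R g - ∫_R^{2R} g ≤ ∫₀^{2R} r |W| ≤ -2R g(R) - 2 ∫_R^{2R} g`.
As `u'(R) → -∞`, `g(R) → -1`, and both integrals of `g` tend to `0`: squeeze.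
-/

open Filter MeasureTheory intervalIntegral

open Set Topology

theorem mul_abs_le_mul_sqrt_sq_add_sq {r : ℝ} (hr : 0 ≤ r) (d s : ℝ) :
    r * |d| ≤ r * √(d ^ 2 + s ^ 2) :=
  mul_le_mul_of_nonneg_left (Real.abs_le_sqrt (le_add_of_nonneg_right (sq_nonneg s))) hr

theorem mul_sqrt_sq_add_div_sq_le {r : ℝ} (hr : 0 < r) (d s : ℝ) :
    r * √(d ^ 2 + (s / r) ^ 2) ≤ r * |d| + |s| := by
  have hsum : √(d ^ 2 + (s / r) ^ 2) ≤ |d| + |s / r| :=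
    Real.sqrt_le_iff.2 ⟨by positivity, by
      nlinarith [sq_abs d, sq_abs (s / r), mul_nonneg (abs_nonneg d) (abs_nonneg (s / r))]⟩
  calc r * √(d ^ 2 + (s / r) ^ 2) ≤ r * (|d| + |s / r|) := mul_le_mul_of_nonneg_left hsum hr.le
    _ = r * |d| + |s| := by rw [abs_div, abs_of_pos hr]; field_simp

theorem hasDerivAt_div_sqrt_one_add_sq (x : ℝ) :
    HasDerivAt (fun y : ℝ => y / √(1 + y ^ 2)) ((1 + x ^ 2) ^ ((3 : ℝ) / 2))⁻¹ x := by
  have hpos : 0 < 1 + x ^ 2 := by positivity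
  have hsqrt : HasDerivAt (fun y : ℝ => √(1 + y ^ 2)) (x / √(1 + x ^ 2)) x := by
    convert ((hasDerivAt_pow 2 x).const_add 1).sqrt hpos.ne' using 1
    simp only [Nat.cast_ofNat]
    field_simp
    ring
  refine ((hasDerivAt_id' x).div hsqrt (Real.sqrt_pos.2 hpos).ne').congr_deriv ?_
  rw [show (3 : ℝ) / 2 = 1 + 1 / 2 by norm_num, Real.rpow_add hpos, Real.rpow_one,
    ← Real.sqrt_eq_rpow]
  field_simp
  rw [Real.sq_sqrt hpos.le]
  ring

theorem tendsto_div_sqrt_one_add_sq_atBot :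
    Tendsto (fun x : ℝ => x / √(1 + x ^ 2)) atBot (𝓝 (-1)) := by
  have hlim : Tendsto (fun t : ℝ => -1 / √(1 + t ^ 2)) (𝓝 0) (𝓝 (-1)) := by
    have hcont : ContinuousAt (fun t : ℝ => -1 / √(1 + t ^ 2)) 0 := by
      fun_prop (disch := positivity)
    simpa using hcont.tendsto
  refine (hlim.comp tendsto_inv_atBot_zero).congr' ?_
  filter_upwards [eventually_lt_atBot 0] with x hx
  have hx0 : x ≠ 0 := hx.ne
  have hroot : √(1 + x ^ 2) = -x * √(1 + x⁻¹ ^ 2) := by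
    rw [← Real.sqrt_sq (neg_nonneg.2 hx.le), ← Real.sqrt_mul (sq_nonneg _)]
    congr 1
    field_simp
    ring
  simp only [Function.comp_apply, hroot]
  field_simp

theorem integral_eq_of_eqOn_zero_outside {f : ℝ → ℝ} {p a b q : ℝ} (hpa : p ≤ a)
    (hbq : b ≤ q) (hleft : EqOn f 0 (Ioo p a)) (hright : EqOn f 0 (Ioo b q))
    (hf : IntervalIntegrable f volume a b) :
    ∫ x in p..q, f x = ∫ x in a..b, f x := by
  have hvanish : ∀ {s t : ℝ}, s ≤ t → EqOn f 0 (Ioo s t) →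
      IntervalIntegrable f volume s t ∧ ∫ x in s..t, f x = 0 := fun hst h =>
    ⟨(intervalIntegrable_congr_uIoo (uIoo_of_le hst ▸ h)).2 intervalIntegrable_const,
      (integral_congr_Ioo_of_le hst h).trans (by simp)⟩
  obtain ⟨hfl, hl⟩ := hvanish hpa hleft
  obtain ⟨hfr, hr⟩ := hvanish hbq hright
  rw [← integral_add_adjacent_intervals (hfl.trans hf) hfr,
    ← integral_add_adjacent_intervals hfl hf, hl, hr, zero_add, add_zero]

section Curvature

variable {g D : ℝ → ℝ} {a b : ℝ}

theorem continuousOn_mul_sqrt_sq_add_div_sq {s : Set ℝ} (hs : ∀ x ∈ s, x ≠ 0)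
    (hg : ContinuousOn g s) (hD : ContinuousOn D s) :
    ContinuousOn (fun x => x * √(D x ^ 2 + (g x / x) ^ 2)) s :=
  continuousOn_id.mul ((hD.pow 2).add ((hg.div continuousOn_id hs).pow 2)).sqrt

theorem integral_mul_deriv_eq_sub_integral (hg : ∀ x ∈ uIcc a b, HasDerivAt g (D x) x)
    (hD : IntervalIntegrable D volume a b) :
    ∫ x in a..b, x * D x = b * g b - a * g a - ∫ x in a..b, g x := by
  simpa using integral_mul_deriv_eq_deriv_mul (fun x _ => hasDerivAt_id' x) hg
    intervalIntegrable_const hD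

theorem integral_mul_sqrt_sq_add_div_sq_bounds (ha : 0 < a) (hab : a ≤ b)
    (hg : ContinuousOn g (Icc a b)) (hD : ContinuousOn D (Icc a b))
    (hgneg : ∀ x ∈ Ioo a b, g x ≤ 0) :
    ∫ x in a..b, x * |D x| ≤ ∫ x in a..b, x * √(D x ^ 2 + (g x / x) ^ 2) ∧
      ∫ x in a..b, x * √(D x ^ 2 + (g x / x) ^ 2) ≤
        (∫ x in a..b, x * |D x|) - ∫ x in a..b, g x := by
  have hgint : IntervalIntegrable g volume a b := hg.intervalIntegrable_of_Icc hab
  have hDint : IntervalIntegrable (fun x => x * |D x|) volume a b :=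
    (continuousOn_id.mul hD.abs).intervalIntegrable_of_Icc hab
  have hFint : IntervalIntegrable (fun x => x * √(D x ^ 2 + (g x / x) ^ 2)) volume a b :=
    (continuousOn_mul_sqrt_sq_add_div_sq (fun x hx => (ha.trans_le hx.1).ne') hg
      hD).intervalIntegrable_of_Icc hab
  refine ⟨integral_mono_on_of_le_Ioo hab hDint hFint fun x hx =>
    mul_abs_le_mul_sqrt_sq_add_sq (ha.trans hx.1).le _ _, ?_⟩
  rw [← integral_sub hDint hgint]
  refine integral_mono_on_of_le_Ioo hab hFint (hDint.sub hgint) fun x hx => ?_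
  calc _ ≤ x * |D x| + |g x| := mul_sqrt_sq_add_div_sq_le (ha.trans hx.1) _ _
    _ = x * |D x| - g x := by rw [abs_of_nonpos (hgneg x hx), sub_eq_add_neg]

theorem integral_mul_sqrt_sq_add_div_sq_bounds_of_deriv_nonpos (ha : 0 < a) (hab : a ≤ b)
    (hg : ∀ x ∈ Icc a b, HasDerivAt g (D x) x) (hD : ContinuousOn D (Icc a b))
    (hDneg : ∀ x ∈ Ioo a b, D x ≤ 0) (hga : g a = 0) :
    -(b * g b) + ∫ x in a..b, g x ≤ ∫ x in a..b, x * √(D x ^ 2 + (g x / x) ^ 2) ∧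
      ∫ x in a..b, x * √(D x ^ 2 + (g x / x) ^ 2) ≤ -(b * g b) := by
  have hgc : ContinuousOn g (Icc a b) := fun x hx => (hg x hx).continuousAt.continuousWithinAt
  have hanti : AntitoneOn g (Icc a b) :=
    antitoneOn_of_hasDerivWithinAt_nonpos (convex_Icc a b) hgc
      (fun x hx => (hg x (interior_subset hx)).hasDerivWithinAt) (by rwa [interior_Icc])
  have hgneg : ∀ x ∈ Ioo a b, g x ≤ 0 := fun x hx =>
    hga ▸ hanti (left_mem_Icc.2 hab) (Ioo_subset_Icc_self hx) hx.1.le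
  have hparts : ∫ x in a..b, x * |D x| = -(b * g b) + ∫ x in a..b, g x := by
    rw [integral_congr_Ioo_of_le hab (g := fun x => -(x * D x)) fun x hx => by
        simp only [abs_of_nonpos (hDneg x hx), mul_neg],
      intervalIntegral.integral_neg, integral_mul_deriv_eq_sub_integral (uIcc_of_le hab ▸ hg)
        (hD.intervalIntegrable_of_Icc hab), hga, mul_zero, sub_zero, neg_sub,
      sub_eq_neg_add]
  obtain ⟨hlower, hupper⟩ := integral_mul_sqrt_sq_add_div_sq_bounds ha hab hgc hD hgneg
  exact ⟨hparts ▸ hlower, by linarith⟩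

theorem integral_mul_sqrt_sq_add_div_sq_bounds_of_deriv_nonneg (ha : 0 < a) (hab : a ≤ b)
    (hg : ∀ x ∈ Icc a b, HasDerivAt g (D x) x) (hD : ContinuousOn D (Icc a b))
    (hDpos : ∀ x ∈ Ioo a b, 0 ≤ D x) (hgb : g b = 0) :
    -(a * g a) - ∫ x in a..b, g x ≤ ∫ x in a..b, x * √(D x ^ 2 + (g x / x) ^ 2) ∧
      ∫ x in a..b, x * √(D x ^ 2 + (g x / x) ^ 2) ≤ -(a * g a) - 2 * ∫ x in a..b, g x := by
  have hgc : ContinuousOn g (Icc a b) := fun x hx => (hg x hx).continuousAt.continuousWithinAt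
  have hmono : MonotoneOn g (Icc a b) :=
    monotoneOn_of_hasDerivWithinAt_nonneg (convex_Icc a b) hgc
      (fun x hx => (hg x (interior_subset hx)).hasDerivWithinAt) (by rwa [interior_Icc])
  have hgneg : ∀ x ∈ Ioo a b, g x ≤ 0 := fun x hx =>
    hgb ▸ hmono (Ioo_subset_Icc_self hx) (right_mem_Icc.2 hab) hx.2.le
  have hparts : ∫ x in a..b, x * |D x| = -(a * g a) - ∫ x in a..b, g x := by
    rw [integral_congr_Ioo_of_le hab (g := fun x => x * D x) fun x hx => by
        simp only [abs_of_nonneg (hDpos x hx)],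
      integral_mul_deriv_eq_sub_integral (uIcc_of_le hab ▸ hg)
        (hD.intervalIntegrable_of_Icc hab), hgb, mul_zero, zero_sub]
  obtain ⟨hlower, hupper⟩ := integral_mul_sqrt_sq_add_div_sq_bounds ha hab hgc hD hgneg
  exact ⟨hparts ▸ hlower, by linarith⟩

end Curvature

noncomputable def tangentSine (u : ℝ → ℝ) (r : ℝ) : ℝ :=
  deriv u r / √(1 + deriv u r ^ 2)

noncomputable def profileCurvature (u : ℝ → ℝ) (r : ℝ) : ℝ :=
  deriv (deriv u) r / (1 + deriv u r ^ 2) ^ ((3 : ℝ) / 2)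

/-- `r |W_u|` in polar coordinates: the principal curvatures of the graph of the radial profile `u`
are `profileCurvature u r` and `tangentSine u r / r`. -/
noncomputable def weingartenDensity (u : ℝ → ℝ) (r : ℝ) : ℝ :=
  r * √(profileCurvature u r ^ 2 + (deriv u r / (r * √(1 + deriv u r ^ 2))) ^ 2)

section RadialProfile

variable {u : ℝ → ℝ} {s : Set ℝ}

theorem weingartenDensity_eq (u : ℝ → ℝ) (r : ℝ) :
    weingartenDensity u r = r * √(profileCurvature u r ^ 2 + (tangentSine u r / r) ^ 2) := by
  rw [weingartenDensity, tangentSine, div_div, mul_comm (√_) r]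

theorem hasDerivAt_tangentSine {r : ℝ} (h : HasDerivAt (deriv u) (deriv (deriv u) r) r) :
    HasDerivAt (tangentSine u) (profileCurvature u r) r :=
  ((hasDerivAt_div_sqrt_one_add_sq (deriv u r)).comp r h).congr_deriv (inv_mul_eq_div _ _)

theorem ContDiffOn.hasDerivAt_tangentSine (hu : ContDiffOn ℝ 2 u s) (hs : IsOpen s) {r : ℝ}
    (hr : r ∈ s) : HasDerivAt (tangentSine u) (profileCurvature u r) r :=
  have hu' : ContDiffOn ℝ 1 (deriv u) s := hu.deriv_of_isOpen hs (by norm_num)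
  _root_.hasDerivAt_tangentSine
    ((hu'.differentiableOn one_ne_zero r hr).differentiableAt (hs.mem_nhds hr)).hasDerivAt

theorem ContDiffOn.continuousOn_profileCurvature (hu : ContDiffOn ℝ 2 u s) (hs : IsOpen s) :
    ContinuousOn (profileCurvature u) s :=
  have hu' : ContDiffOn ℝ 1 (deriv u) s := hu.deriv_of_isOpen hs (by norm_num)
  (hu'.continuousOn_deriv_of_isOpen hs le_rfl).div
    ((continuousOn_const.add (hu'.continuousOn.pow 2)).rpow_const fun _ _ => Or.inr (by norm_num))
    fun _ _ => (Real.rpow_pos_of_pos (by positivity) _).ne'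

theorem tangentSine_eqOn_zero_of_eqOn_const {c : ℝ} (hs : IsOpen s)
    (hc : EqOn u (fun _ => c) s) : EqOn (tangentSine u) 0 s := fun r hr => by
  simp [tangentSine, hc.deriv hs hr]

theorem weingartenDensity_eqOn_zero_of_eqOn_const {c : ℝ} (hs : IsOpen s)
    (hc : EqOn u (fun _ => c) s) : EqOn (weingartenDensity u) 0 s := fun r hr => by
  have hu' : EqOn (deriv u) (fun _ => 0) s := fun x hx => by simp [hc.deriv hs hx]
  simp [weingartenDensity, profileCurvature, hu' hr, hu'.deriv hs hr]

theorem integral_weingartenDensity_eq_add {R L a b c₁ c₂ : ℝ}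
    (hu : ContDiffOn ℝ 2 u (Ioo 0 L)) (ha : 0 < a) (haR : a ≤ R) (hRb : R ≤ b) (hbL : b < L)
    (hc₁ : EqOn u (fun _ => c₁) (Ioo 0 a)) (hc₂ : EqOn u (fun _ => c₂) (Ioo b L)) :
    ∫ r in 0..L, weingartenDensity u r =
      (∫ r in a..R, r * √(profileCurvature u r ^ 2 + (tangentSine u r / r) ^ 2)) +
        ∫ r in R..b, r * √(profileCurvature u r ^ 2 + (tangentSine u r / r) ^ 2) := by
  have hsub : Icc a b ⊆ Ioo 0 L := fun x hx => ⟨ha.trans_le hx.1, hx.2.trans_lt hbL⟩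
  have hsine : ContinuousOn (tangentSine u) (Icc a b) := fun x hx =>
    (hu.hasDerivAt_tangentSine isOpen_Ioo (hsub hx)).continuousAt.continuousWithinAt
  have hint : IntervalIntegrable
      (fun r => r * √(profileCurvature u r ^ 2 + (tangentSine u r / r) ^ 2)) volume a b :=
    (continuousOn_mul_sqrt_sq_add_div_sq (fun x hx => (ha.trans_le hx.1).ne') hsine
      ((hu.continuousOn_profileCurvature isOpen_Ioo).mono hsub)).intervalIntegrable_of_Icc
      (haR.trans hRb)
  have hdensity := funext (weingartenDensity_eq u)
  rw [integral_eq_of_eqOn_zero_outside ha.le hbL.le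
    (weingartenDensity_eqOn_zero_of_eqOn_const isOpen_Ioo hc₁)
    (weingartenDensity_eqOn_zero_of_eqOn_const isOpen_Ioo hc₂) (hdensity ▸ hint), hdensity,
    integral_add_adjacent_intervals]
  exacts [hint.mono_set (uIcc_subset_uIcc left_mem_uIcc (mem_uIcc_of_le haR hRb)),
    hint.mono_set (uIcc_subset_uIcc (mem_uIcc_of_le haR hRb) right_mem_uIcc)]

theorem weingarten_energy_bounds {R L R₁ R₂ c₁ c₂ : ℝ}
    (hu : ContDiffOn ℝ 2 u (Ioo 0 L)) (h₁ : 0 < R₁) (h₁R : R₁ < R) (hR₂ : R < R₂) (h₂ : R₂ < L)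
    (hc₁ : EqOn u (fun _ => c₁) (Ioo 0 R₁)) (hc₂ : EqOn u (fun _ => c₂) (Ioo R₂ L))
    (hconc : ∀ r ∈ Ioo 0 R, deriv (deriv u) r ≤ 0)
    (hconv : ∀ r ∈ Ioo R L, 0 ≤ deriv (deriv u) r) :
    -(2 * R * tangentSine u R) + (∫ r in 0..R, tangentSine u r) - ∫ r in R..L, tangentSine u r ≤
        ∫ r in 0..L, weingartenDensity u r ∧
      ∫ r in 0..L, weingartenDensity u r ≤
        -(2 * R * tangentSine u R) - 2 * ∫ r in R..L, tangentSine u r := by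
  -- `u` is only known on `(0, L)`; cutting at `a`, `b` inside the flat zones avoids the endpoints.
  obtain ⟨a, ha, haR₁⟩ := exists_between h₁
  obtain ⟨b, hbR₂, hbL⟩ := exists_between h₂
  have haR : a < R := haR₁.trans h₁R
  have hRb : R < b := hR₂.trans hbR₂
  have hsub : Icc a b ⊆ Ioo 0 L := fun x hx => ⟨ha.trans_le hx.1, hx.2.trans_lt hbL⟩
  have hderiv : ∀ x ∈ Icc a b, HasDerivAt (tangentSine u) (profileCurvature u x) x :=
    fun x hx => hu.hasDerivAt_tangentSine isOpen_Ioo (hsub hx)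
  have hcurv : ContinuousOn (profileCurvature u) (Icc a b) :=
    (hu.continuousOn_profileCurvature isOpen_Ioo).mono hsub
  have hsine : ContinuousOn (tangentSine u) (Icc a b) :=
    fun x hx => (hderiv x hx).continuousAt.continuousWithinAt
  have hIcc₁ : Icc a R ⊆ Icc a b := Icc_subset_Icc_right hRb.le
  have hIcc₂ : Icc R b ⊆ Icc a b := Icc_subset_Icc_left haR.le
  have hcurv_nonpos : ∀ x ∈ Ioo a R, profileCurvature u x ≤ 0 := fun x hx =>
    div_nonpos_of_nonpos_of_nonneg (hconc x ⟨ha.trans hx.1, hx.2⟩) (by positivity)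
  have hcurv_nonneg : ∀ x ∈ Ioo R b, 0 ≤ profileCurvature u x := fun x hx =>
    div_nonneg (hconv x ⟨hx.1, hx.2.trans hbL⟩) (by positivity)
  have hflat₁ := tangentSine_eqOn_zero_of_eqOn_const isOpen_Ioo hc₁
  have hflat₂ := tangentSine_eqOn_zero_of_eqOn_const isOpen_Ioo hc₂
  obtain ⟨hlower₁, hupper₁⟩ := integral_mul_sqrt_sq_add_div_sq_bounds_of_deriv_nonpos ha haR.le
    (fun x hx => hderiv x (hIcc₁ hx)) (hcurv.mono hIcc₁) hcurv_nonpos (hflat₁ ⟨ha, haR₁⟩)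
  obtain ⟨hlower₂, hupper₂⟩ := integral_mul_sqrt_sq_add_div_sq_bounds_of_deriv_nonneg
    (ha.trans haR) hRb.le (fun x hx => hderiv x (hIcc₂ hx)) (hcurv.mono hIcc₂) hcurv_nonneg
    (hflat₂ ⟨hbR₂, hbL⟩)
  have hsine₁ : ∫ r in 0..R, tangentSine u r = ∫ r in a..R, tangentSine u r :=
    integral_eq_of_eqOn_zero_outside ha.le le_rfl (hflat₁.mono (Ioo_subset_Ioo_right haR₁.le))
      (by simp) ((hsine.mono hIcc₁).intervalIntegrable_of_Icc haR.le)
  have hsine₂ : ∫ r in R..L, tangentSine u r = ∫ r in R..b, tangentSine u r :=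
    integral_eq_of_eqOn_zero_outside le_rfl hbL.le (by simp)
      (hflat₂.mono (Ioo_subset_Ioo_left hbR₂.le))
      ((hsine.mono hIcc₂).intervalIntegrable_of_Icc hRb.le)
  rw [integral_weingartenDensity_eq_add hu ha haR.le hRb.le hbL
    (hc₁.mono (Ioo_subset_Ioo_right haR₁.le)) (hc₂.mono (Ioo_subset_Ioo_left hbR₂.le)),
    hsine₁, hsine₂]
  constructor <;> linarith

end RadialProfile

theorem weingarten_energy_limit_general
    (R h : ℝ)
    (φ : ℕ → ℝ → ℝ) (R₁ R₂ : ℕ → ℝ)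
    (hclass : ∀ n, ContDiffOn ℝ 2 (φ n) (Set.Icc 0 (2*R)) ∧
      0 < R₁ n ∧ R₁ n < R ∧ R < R₂ n ∧ R₂ n < 2*R ∧
      (∀ r ∈ Set.Icc 0 (R₁ n), φ n r = h) ∧
      (∀ r ∈ Set.Icc (R₂ n) (2*R), φ n r = 0) ∧
      (∀ r ∈ Set.Ioo 0 R, deriv (deriv (φ n)) r ≤ 0) ∧
      (∀ r ∈ Set.Ioo R (2*R), 0 ≤ deriv (deriv (φ n)) r) ∧
      deriv (φ n) R < -(2*h/R))
    (hder : Tendsto (fun n => deriv (φ n) R) atTop atBot)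
    (hint1 : Tendsto (fun n => ∫ r in (0:ℝ)..R,
        deriv (φ n) r / Real.sqrt (1 + (deriv (φ n) r)^2)) atTop (nhds 0))
    (hint2 : Tendsto (fun n => ∫ r in R..(2*R),
        deriv (φ n) r / Real.sqrt (1 + (deriv (φ n) r)^2)) atTop (nhds 0)) :
    Tendsto (fun n => 2 * Real.pi * ∫ r in (0:ℝ)..(2*R),
        r * Real.sqrt ((deriv (deriv (φ n)) r / (1 + (deriv (φ n) r)^2) ^ ((3:ℝ)/2))^2
          + (deriv (φ n) r / (r * Real.sqrt (1 + (deriv (φ n) r)^2)))^2))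
      atTop (nhds (4 * Real.pi * R)) := by
  have hbounds := fun n => by
    obtain ⟨hC2, h₁, h₁R, hR₂, h₂, hconst, hzero, hconc, hconv, -⟩ := hclass n
    exact weingarten_energy_bounds (hC2.mono Ioo_subset_Icc_self) h₁ h₁R hR₂ h₂
      (fun r hr => hconst r (Ioo_subset_Icc_self hr)) (fun r hr => hzero r (Ioo_subset_Icc_self hr))
      hconc hconv
  have hsine : Tendsto (fun n => tangentSine (φ n) R) atTop (𝓝 (-1)) :=
    tendsto_div_sqrt_one_add_sq_atBot.comp hder
  refine tendsto_of_tendsto_of_tendsto_of_le_of_le ?_ ?_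
    (fun n => mul_le_mul_of_nonneg_left (hbounds n).1 (by positivity))
    (fun n => mul_le_mul_of_nonneg_left (hbounds n).2 (by positivity))
  · rw [show 4 * Real.pi * R = 2 * Real.pi * (-(2 * R * -1) + 0 - 0) by ring]
    exact (((hsine.const_mul (2 * R)).neg.add hint1).sub hint2).const_mul (2 * Real.pi)
  · rw [show 4 * Real.pi * R = 2 * Real.pi * (-(2 * R * -1) - 2 * 0) by ring]
    exact ((hsine.const_mul (2 * R)).neg.sub (hint2.const_mul 2)).const_mul (2 * Real.pi)

/-- for radial approximants `uₙ ∈ S` of `f = h·χ_{B(0,R)}` with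
`uₙ'(R) → −∞` and vanishing integrals of `uₙ'/√(1+(uₙ')²)`, the Weingarten energy
`∫_Ω |W_{uₙ}| = 2π ∫₀^{2R} r·|W| dr` converges to `4πR`. -/
theorem weingarten_energy_limit
    (R h : ℝ) (hR : 0 < R) (hh : 0 < h)
    (φ : ℕ → ℝ → ℝ) (R₁ R₂ : ℕ → ℝ)
    (hclass : ∀ n, ContDiffOn ℝ 2 (φ n) (Set.Icc 0 (2*R)) ∧
      0 < R₁ n ∧ R₁ n < R ∧ R < R₂ n ∧ R₂ n < 2*R ∧
      (∀ r ∈ Set.Icc 0 (R₁ n), φ n r = h) ∧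
      (∀ r ∈ Set.Icc (R₂ n) (2*R), φ n r = 0) ∧
      (∀ r ∈ Set.Ioo 0 R, deriv (deriv (φ n)) r ≤ 0) ∧
      (∀ r ∈ Set.Ioo R (2*R), 0 ≤ deriv (deriv (φ n)) r) ∧
      deriv (φ n) R < -(2*h/R))
    (hpt : ∀ r ∈ Set.Icc (0:ℝ) (2*R),
      Tendsto (fun n => φ n r) atTop (nhds (if r < R then h else 0)))
    (hder : Tendsto (fun n => deriv (φ n) R) atTop atBot)
    (hint1 : Tendsto (fun n => ∫ r in (0:ℝ)..R,
        deriv (φ n) r / Real.sqrt (1 + (deriv (φ n) r)^2)) atTop (nhds 0))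
    (hint2 : Tendsto (fun n => ∫ r in R..(2*R),
        deriv (φ n) r / Real.sqrt (1 + (deriv (φ n) r)^2)) atTop (nhds 0)) :
    Tendsto (fun n => 2 * Real.pi * ∫ r in (0:ℝ)..(2*R),
        r * Real.sqrt ((deriv (deriv (φ n)) r / (1 + (deriv (φ n) r)^2) ^ ((3:ℝ)/2))^2
          + (deriv (φ n) r / (r * Real.sqrt (1 + (deriv (φ n) r)^2)))^2))
      atTop (nhds (4 * Real.pi * R)) :=
  weingarten_energy_limit_general R h φ R₁ R₂ hclass hder hint1 hint2
end

section
/- Let h, R > 0 and let u : [0,2R] → ℝ be any function in the class S with u'(R) < −2h/R, and suppose the lower bound ∫_Ω (f − u)² dx dy ≥ −πh³R/(12u'(R)) holds, where f = h·χ_{B(0,R)}. Define E(u) = ∫_Ω |W_u| + (1/2λ)∫_Ω (f−u)². If λ < h⁴/(48R), then E(u) > 4πR for every u ∈ S, where we use the lower bound ∫_Ω |W_u| ≥ −4πR·u'(R)/√(1+(u'(R))²). -/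
/-!
With `x = -u'(R) > 2h/R`, the total-variation bound falls short of `4πR` by
`4πR (1 - x/√(1+x²)) < 2πR/x²`, while the fidelity term contributes at least `πh³R/(24λx)`.
The latter beats the former as soon as `λ ≤ h³x/48`, which `λ < h⁴/(48R)` and `x > 2h/R` guarantee.
-/

open Real

/-- The deficit is `1 / (s (s + x))` with `s = √(1 + x²) > x`. -/
lemma one_sub_div_sqrt_one_add_sq_lt {x : ℝ} (hx : 0 < x) :
    1 - x / √(1 + x ^ 2) < 1 / (2 * x ^ 2) := by
  set s := √(1 + x ^ 2) with hs
  have hs_sq : s ^ 2 = 1 + x ^ 2 := sq_sqrt (by positivity)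
  have hxs : x < s := by
    rw [hs]; exact lt_sqrt_of_sq_lt (by linarith)
  have hs_pos : 0 < s := hx.trans hxs
  have hdeficit : 1 - x / s = 1 / (s * (s + x)) := by
    field_simp
    nlinarith
  rw [hdeficit]
  exact one_div_lt_one_div_of_lt (by positivity) (by nlinarith)

lemma lt_mul_div_sqrt_one_add_sq_add_div {c₁ c₂ lam x : ℝ} (hc₁ : 0 < c₁) (hlam : 0 < lam)
    (hx : 0 < x) (hlam_le : lam * c₁ ≤ 2 * c₂ * x) :
    c₁ < c₁ * x / √(1 + x ^ 2) + c₂ / (lam * x) := by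
  have hdeficit : c₁ * (1 - x / √(1 + x ^ 2)) < c₁ * (1 / (2 * x ^ 2)) :=
    mul_lt_mul_of_pos_left (one_sub_div_sqrt_one_add_sq_lt hx) hc₁
  have hpenalty : c₁ * (1 / (2 * x ^ 2)) ≤ c₂ / (lam * x) := by
    rw [mul_one_div, div_le_div_iff₀ (by positivity) (by positivity)]
    nlinarith
  rw [mul_sub, mul_one, mul_div_assoc'] at hdeficit
  linarith

/-- contrast preservation: if `λ < h⁴/(48R)` then, using the lower bounds
`∫_Ω |W_u| ≥ −4πR·u'(R)/√(1+(u'(R))²)` and `∫_Ω (f−u)² ≥ −πh³R/(12u'(R))` valid for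
`u ∈ S` (so `u'(R) < −2h/R`), the energy
`E(u) = ∫_Ω |W_u| + (1/2λ)∫_Ω (f−u)²` satisfies `E(u) > 4πR`. -/
theorem energy_exceeds_contrast
    (h R lam : ℝ) (hh : 0 < h) (hR : 0 < R) (hlam : 0 < lam)
    (hcond : lam < h^4 / (48*R))
    (uR' WInt FInt : ℝ)
    (huR' : uR' < -(2*h/R))
    (hW : WInt ≥ -(4*Real.pi*R) * uR' / Real.sqrt (1 + uR'^2))
    (hF : FInt ≥ -(Real.pi * h^3 * R) / (12 * uR')) :
    WInt + (1/(2*lam)) * FInt > 4*Real.pi*R := by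
  obtain ⟨x, rfl⟩ : ∃ x, uR' = -x := ⟨-uR', (neg_neg uR').symm⟩
  have hx : 2 * h / R < x := by linarith
  have hx_pos : 0 < x := (by positivity : (0 : ℝ) < 2 * h / R).trans hx
  have hW' : 4 * π * R * x / √(1 + x ^ 2) ≤ WInt := by
    simpa only [neg_sq, neg_mul_neg] using hW
  have hF' : π * h ^ 3 * R / 24 / (lam * x) ≤ (1 / (2 * lam)) * FInt := by
    calc π * h ^ 3 * R / 24 / (lam * x)
        = (1 / (2 * lam)) * (-(π * h ^ 3 * R) / (12 * -x)) := by field_simp; ring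
      _ ≤ (1 / (2 * lam)) * FInt := by gcongr
  have hlam_le : lam * (4 * π * R) ≤ 2 * (π * h ^ 3 * R / 24) * x := by
    have hhx : h ^ 4 / (48 * R) ≤ h ^ 3 * x / 48 := by
      rw [div_le_div_iff₀ (by positivity) (by norm_num)]
      nlinarith [(div_lt_iff₀ hR).mp hx, pow_pos hh 3]
    have hlam_le' : lam ≤ h ^ 3 * x / 48 := by linarith
    calc lam * (4 * π * R) ≤ h ^ 3 * x / 48 * (4 * π * R) := by gcongr
      _ = 2 * (π * h ^ 3 * R / 24) * x := by ring
  have := lt_mul_div_sqrt_one_add_sq_add_div (by positivity) hlam hx_pos hlam_le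
  linarith
end
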